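/- arXiv:2408.03446 — 8 statements merged into one kernel-verified Lean document; each statement's English description precedes it below -/
import Mathlib

section
/- If the interference-plus-noise of signal n+1 satisfies I_{n+1} = Σ_{i=n+2}^{M} p_i + σ² ≤ p_{n+1}/Γ (i.e., SINR_{n+1} ≥ Γ), and p_n ≥ (1+Γ)·p_{n+1}, then I_n = Σ_{i=n+1}^{M} p_i + σ² ≤ p_n/Γ, i.e., SINR_n ≥ Γ. -/
open Finset

theorem sinr_decode_step (M n : ℕ) (p : ℕ → ℝ) (σ Γ : ℝ)
    (hM : 2 ≤ M) (hp : ∀ i ∈ Finset.Icc 1 M, 0 < p i)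
    (hσ : 0 < σ) (hΓ : 0 < Γ)
    (hn1 : 1 ≤ n) (hn2 : n ≤ M - 1)
    (hI : ∑ i ∈ Finset.Icc (n + 2) M, p i + σ ^ 2 ≤ p (n + 1) / Γ)
    (hpow : p n ≥ (1 + Γ) * p (n + 1)) :
    ∑ i ∈ Finset.Icc (n + 1) M, p i + σ ^ 2 ≤ p n / Γ := by
  have hnM : n + 1 ≤ M := by omega
  have hset : Finset.Icc (n + 1) M = insert (n + 1) (Finset.Icc (n + 2) M) := by
    ext i; simp; omega
  rw [hset, Finset.sum_insert (by simp)]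
  have h1 : p (n + 1) + (∑ i ∈ Finset.Icc (n + 2) M, p i + σ ^ 2)
      ≤ p (n + 1) + p (n + 1) / Γ := by linarith
  have h2 : p (n + 1) + p (n + 1) / Γ = (1 + Γ) * p (n + 1) / Γ := by
    field_simp; ring
  have h3 : (1 + Γ) * p (n + 1) / Γ ≤ p n / Γ := by
    gcongr
  linarith
end

section
/- Suppose SINR_n ≥ Γ for all n, i.e., p_n ≥ Γ·(Σ_{i=n+1}^{M} p_i + σ²) for every 1 ≤ n ≤ M. Then p_n ≥ σ²·Γ·(1+Γ)^{M-n} for every 1 ≤ n ≤ M. -/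
theorem sinr_implies_geometric_bound (M : ℕ) (p : ℕ → ℝ) (σ Γ : ℝ)
    (hM : 1 ≤ M) (hp : ∀ i ∈ Finset.Icc 1 M, 0 < p i)
    (hσ : 0 < σ) (hΓ : 0 < Γ)
    (hsinr : ∀ n, 1 ≤ n → n ≤ M →
      p n ≥ Γ * (∑ i ∈ Finset.Icc (n + 1) M, p i + σ ^ 2)) :
    ∀ n, 1 ≤ n → n ≤ M → p n ≥ σ ^ 2 * Γ * (1 + Γ) ^ (M - n) := by
  have key : ∀ k, ∀ n, n + k = M →
      ∑ i ∈ Finset.Icc (n + 1) M, p i + σ ^ 2 ≥ σ ^ 2 * (1 + Γ) ^ k := by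
    intro k
    induction k with
    | zero =>
      intro n hn
      have : Finset.Icc (n + 1) M = ∅ := by
        apply Finset.Icc_eq_empty; omega
      rw [this]
      simp
    | succ k ih =>
      intro n hn
      have h1 : n + 1 ≤ M := by omega
      have hsplit : Finset.Icc (n + 1) M = insert (n + 1) (Finset.Icc (n + 2) M) := by
        ext x; simp; omega
      have hnotmem : n + 1 ∉ Finset.Icc (n + 2) M := by simp
      rw [hsplit, Finset.sum_insert hnotmem]
      have ih' := ih (n + 1) (by omega)
      have hs' := hsinr (n + 1) (by omega) h1
      rw [show n + 1 + 1 = n + 2 from rfl] at ih' hs'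
      have hpow : (0:ℝ) < (1 + Γ) ^ k := by positivity
      have hmul : Γ * (σ ^ 2 * (1 + Γ) ^ k) ≤ Γ * (∑ i ∈ Finset.Icc (n + 2) M, p i + σ ^ 2) :=
        mul_le_mul_of_nonneg_left ih' hΓ.le
      rw [pow_succ (1 + Γ) k]
      generalize (1 + Γ) ^ k = c at ih' hmul ⊢
      nlinarith [hmul, hs', ih']
  intro n hn1 hnM
  have hk := key (M - n) n (by omega)
  have hs := hsinr n hn1 hnM
  have hpow : (0:ℝ) < (1 + Γ) ^ (M - n) := by positivity
  nlinarith
end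

section
/- If SINR_n = p_n/(Σ_{i=n+1}^{M} p_i + σ²) ≥ Γ for all 1 ≤ n ≤ M, then the total received power satisfies Σ_{n=1}^{M} p_n ≥ σ²·((1+Γ)^M − 1). -/
theorem total_power_lower_bound (M : ℕ) (p : ℕ → ℝ) (σ Γ : ℝ)
    (hM : 1 ≤ M) (hp : ∀ i ∈ Finset.Icc 1 M, 0 < p i)
    (hσ : 0 < σ) (hΓ : 0 < Γ)
    (hsinr : ∀ n, 1 ≤ n → n ≤ M →
      p n / (∑ i ∈ Finset.Icc (n + 1) M, p i + σ ^ 2) ≥ Γ) :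
    ∑ n ∈ Finset.Icc 1 M, p n ≥ σ ^ 2 * ((1 + Γ) ^ M - 1) := by
  have hσ2 : (0:ℝ) < σ ^ 2 := by positivity
  have key : ∀ k, k ≤ M →
      ∑ i ∈ Finset.Icc (M + 1 - k) M, p i + σ ^ 2 ≥ (1 + Γ) ^ k * σ ^ 2 := by
    intro k
    induction k with
    | zero =>
      intro _
      simp [Finset.Icc_eq_empty_of_lt (Nat.lt_succ_self M)]
    | succ k ih =>
      intro hk
      have hkM : k ≤ M := Nat.le_of_succ_le hk
      have ihS := ih hkM
      set n := M - k with hn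
      have hn1 : 1 ≤ n := by omega
      have hnM : n ≤ M := by omega
      have heq1 : M + 1 - (k + 1) = n := by omega
      have heq2 : M + 1 - k = n + 1 := by omega
      rw [heq2] at ihS
      set S := ∑ i ∈ Finset.Icc (n + 1) M, p i with hS
      have hSpos : 0 < S + σ ^ 2 := by
        have : 0 ≤ S := Finset.sum_nonneg (fun i hi => by
          apply le_of_lt; apply hp
          simp only [Finset.mem_Icc] at hi ⊢; omega)
        linarith
      have hpn : p n ≥ Γ * (S + σ ^ 2) := by
        have := hsinr n hn1 hnM
        rw [ge_iff_le, le_div_iff₀ hSpos] at this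
        linarith
      have hsplit : ∑ i ∈ Finset.Icc n M, p i = p n + S := by
        rw [hS, Finset.Icc_add_one_left_eq_Ioc, ← Finset.Ioc_insert_left hnM,
          Finset.sum_insert (by simp)]
      rw [heq1, hsplit]
      have h1 : p n + S + σ ^ 2 ≥ (1 + Γ) * (S + σ ^ 2) := by ring_nf; nlinarith
      have h2 : (1 + Γ) * (S + σ ^ 2) ≥ (1 + Γ) * ((1 + Γ) ^ k * σ ^ 2) := by
        apply mul_le_mul_of_nonneg_left ihS (by linarith)
      calc p n + S + σ ^ 2 ≥ (1 + Γ) * (S + σ ^ 2) := h1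
        _ ≥ (1 + Γ) * ((1 + Γ) ^ k * σ ^ 2) := h2
        _ = (1 + Γ) ^ (k + 1) * σ ^ 2 := by ring
  have := key M le_rfl
  have heq : M + 1 - M = 1 := by omega
  rw [heq] at this
  nlinarith [this]
end

section
/- If p_1 < σ²·Γ·(1+Γ)^{M−1}, then there is no assignment of powers p_2,...,p_M ∈ (0, ∞) with p_1 ≥ p_2 ≥ ... ≥ p_M such that SINR_n = p_n/(Σ_{i>n} p_i + σ²) ≥ Γ holds for all n = 1,...,M. -/
theorem bound_tightness (M : ℕ) (p1 σ Γ : ℝ)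
    (hM : 1 ≤ M) (hσ : 0 < σ) (hΓ : 0 < Γ)
    (hsmall : p1 < σ ^ 2 * Γ * (1 + Γ) ^ (M - 1)) :
    ¬ ∃ p : ℕ → ℝ, p 1 = p1 ∧ (∀ i ∈ Finset.Icc 1 M, 0 < p i) ∧
      (∀ n, 1 ≤ n → n < M → p (n + 1) ≤ p n) ∧
      (∀ n, 1 ≤ n → n ≤ M →
        p n / (∑ i ∈ Finset.Icc (n + 1) M, p i + σ ^ 2) ≥ Γ) := by
  rintro ⟨p, hp1, hpos, hmono, hsinr⟩
  have hσ2 : 0 < σ ^ 2 := by positivity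
  have hden : ∀ n, 0 < ∑ i ∈ Finset.Icc (n + 1) M, p i + σ ^ 2 := by
    intro n
    have hs : 0 ≤ ∑ i ∈ Finset.Icc (n + 1) M, p i := by
      apply Finset.sum_nonneg
      intro i hi
      simp only [Finset.mem_Icc] at hi
      exact le_of_lt (hpos i (Finset.mem_Icc.mpr ⟨by omega, hi.2⟩))
    linarith
  have hkey : ∀ k, k ≤ M - 1 →
      (1 + Γ) ^ k * σ ^ 2 ≤ ∑ i ∈ Finset.Icc (M - k + 1) M, p i + σ ^ 2 := by
    intro k
    induction k with
    | zero =>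
      intro _
      have : Finset.Icc (M - 0 + 1) M = ∅ := by
        apply Finset.Icc_eq_empty
        omega
      rw [this]
      simp
    | succ k ih =>
      intro hk
      have hk' : k ≤ M - 1 := by omega
      have ihk := ih hk'
      set m := M - k with hm
      have hm1 : 1 ≤ m := by omega
      have hmM : m ≤ M := by omega
      have hidx : M - (k + 1) + 1 = m := by omega
      rw [hidx]
      have hsinrm := hsinr m hm1 hmM
      have hdenm := hden m
      have hpm : Γ * (∑ i ∈ Finset.Icc (m + 1) M, p i + σ ^ 2) ≤ p m := by
        rw [ge_iff_le, le_div_iff₀ hdenm] at hsinrm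
        linarith
      have hsplit : ∑ i ∈ Finset.Icc m M, p i
          = p m + ∑ i ∈ Finset.Icc (m + 1) M, p i := by
        rw [show Finset.Icc (m+1) M = Finset.Ioc m M from Finset.Icc_add_one_left_eq_Ioc m M,
          ← Finset.Ioc_insert_left hmM, Finset.sum_insert (by simp)]
      have hstep : (1 + Γ) ^ (k + 1) * σ ^ 2
          ≤ (1 + Γ) * (∑ i ∈ Finset.Icc (m + 1) M, p i + σ ^ 2) := by
        rw [pow_succ, mul_comm ((1+Γ)^k), mul_assoc]
        exact mul_le_mul_of_nonneg_left ihk (by linarith)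
      rw [hsplit]
      nlinarith [hstep, hpm]
  have hfin := hkey (M - 1) le_rfl
  have hidx : M - (M - 1) = 1 := by omega
  rw [hidx] at hfin
  have hs1 := hsinr 1 le_rfl hM
  have hd1 := hden 1
  rw [ge_iff_le, le_div_iff₀ hd1] at hs1
  have : σ ^ 2 * Γ * (1 + Γ) ^ (M - 1) ≤ p 1 := by
    calc σ ^ 2 * Γ * (1 + Γ) ^ (M - 1)
        = Γ * ((1 + Γ) ^ (M - 1) * σ ^ 2) := by ring
      _ ≤ Γ * (∑ i ∈ Finset.Icc (1 + 1) M, p i + σ ^ 2) :=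
          mul_le_mul_of_nonneg_left hfin (le_of_lt hΓ)
      _ ≤ p 1 := hs1
  rw [hp1] at this
  linarith
end

section
/- The maximum number M of powers p_1 ≥ ... ≥ p_M > 0 with p_1 ≤ P satisfying SINR_n ≥ Γ for all n equals ⌊ log(P/(σ²Γ))/log(1+Γ) ⌋ + 1, provided P ≥ σ²·Γ. -/
lemma sum_Icc_bot (f : ℕ → ℝ) {n M : ℕ} (h : n ≤ M) :
    ∑ i ∈ Finset.Icc n M, f i = f n + ∑ i ∈ Finset.Icc (n+1) M, f i := by
  rw [Finset.Icc_add_one_left_eq_Ioc, Finset.Icc_eq_cons_Ioc h, Finset.sum_cons]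

lemma geom_sum' (σ Γ : ℝ) (M : ℕ) : ∀ k, k ≤ M →
    ∑ i ∈ Finset.Icc (M+1-k) M, σ^2*Γ*(1+Γ)^(M-i) + σ^2 = σ^2*(1+Γ)^k := by
  intro k
  induction k with
  | zero => intro _; simp
  | succ k ih =>
    intro hk
    have hkM : k ≤ M := Nat.le_of_succ_le hk
    have h1 : M + 1 - (k+1) = M - k := by omega
    have h2 : (M - k) + 1 = M + 1 - k := by omega
    have h3 : M - k ≤ M := Nat.sub_le _ _
    have h4 : M - (M - k) = k := by omega
    rw [h1, sum_Icc_bot _ h3, h2, h4]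
    have hsum : ∑ i ∈ Finset.Icc (M+1-k) M, σ^2*Γ*(1+Γ)^(M-i) = σ^2*(1+Γ)^k - σ^2 := by
      linarith [ih hkM]
    rw [hsum, pow_succ]
    ring

lemma lower_sum (σ Γ : ℝ) (hσ : 0 < σ) (hΓ : 0 < Γ) (M : ℕ) (p : ℕ → ℝ)
    (hpos : ∀ i ∈ Finset.Icc 1 M, 0 < p i)
    (hsinr : ∀ n, 1 ≤ n → n ≤ M →
      p n / (∑ i ∈ Finset.Icc (n + 1) M, p i + σ ^ 2) ≥ Γ) :
    ∀ k, k ≤ M → σ^2*(1+Γ)^k ≤ ∑ i ∈ Finset.Icc (M+1-k) M, p i + σ^2 := by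
  intro k
  induction k with
  | zero => intro _; simp
  | succ k ih =>
    intro hk
    have hkM : k ≤ M := Nat.le_of_succ_le hk
    set n := M - k with hn
    have hn1 : 1 ≤ n := by omega
    have hnM : n ≤ M := by omega
    have h1 : M + 1 - (k+1) = n := by omega
    have h2 : n + 1 = M + 1 - k := by omega
    have hD : (0:ℝ) < ∑ i ∈ Finset.Icc (n+1) M, p i + σ^2 := by
      have : (0:ℝ) ≤ ∑ i ∈ Finset.Icc (n+1) M, p i := by
        apply Finset.sum_nonneg
        intro i hi
        simp only [Finset.mem_Icc] at hi
        exact (hpos i (Finset.mem_Icc.mpr ⟨by omega, hi.2⟩)).le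
      nlinarith
    have hp1 : Γ * (∑ i ∈ Finset.Icc (n+1) M, p i + σ^2) ≤ p n :=
      (le_div_iff₀ hD).mp (hsinr n hn1 hnM)
    have hih : σ^2*(1+Γ)^k ≤ ∑ i ∈ Finset.Icc (n+1) M, p i + σ^2 := by
      rw [h2]; exact ih hkM
    rw [h1, sum_Icc_bot _ hnM, pow_succ]
    have key : (1+Γ) * (σ^2*(1+Γ)^k) ≤ (1+Γ) * (∑ i ∈ Finset.Icc (n+1) M, p i + σ^2) :=
      mul_le_mul_of_nonneg_left hih (by linarith)
    have expand : (1+Γ) * (∑ i ∈ Finset.Icc (n+1) M, p i + σ^2)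
        = (∑ i ∈ Finset.Icc (n+1) M, p i + σ^2) + Γ*(∑ i ∈ Finset.Icc (n+1) M, p i + σ^2) := by
      ring
    calc σ^2*((1+Γ)^k*(1+Γ)) = (1+Γ) * (σ^2*(1+Γ)^k) := by ring
      _ ≤ (1+Γ) * (∑ i ∈ Finset.Icc (n+1) M, p i + σ^2) := key
      _ ≤ p n + ∑ i ∈ Finset.Icc (n+1) M, p i + σ^2 := by linarith [hp1, expand]

theorem max_users_formula (P σ Γ : ℝ)
    (hσ : 0 < σ) (hΓ : 0 < Γ) (hP : σ ^ 2 * Γ ≤ P) :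
    IsGreatest {M : ℕ | ∃ p : ℕ → ℝ,
        (∀ i ∈ Finset.Icc 1 M, 0 < p i) ∧
        (∀ n, 1 ≤ n → n < M → p (n + 1) ≤ p n) ∧
        p 1 ≤ P ∧
        (∀ n, 1 ≤ n → n ≤ M →
          p n / (∑ i ∈ Finset.Icc (n + 1) M, p i + σ ^ 2) ≥ Γ)}
      (⌊Real.log (P / (σ ^ 2 * Γ)) / Real.log (1 + Γ)⌋₊ + 1) := by
  have hσ2 : (0:ℝ) < σ ^ 2 := by positivity
  have hσΓ : (0:ℝ) < σ ^ 2 * Γ := by positivity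
  have hA1 : (1:ℝ) ≤ P / (σ ^ 2 * Γ) := (one_le_div hσΓ).mpr hP
  have hApos : (0:ℝ) < P / (σ ^ 2 * Γ) := by linarith
  have hG1 : (1:ℝ) < 1 + Γ := by linarith
  have hlogG : 0 < Real.log (1 + Γ) := Real.log_pos hG1
  set A := P / (σ ^ 2 * Γ) with hA
  set K := ⌊Real.log A / Real.log (1 + Γ)⌋₊ with hK
  -- (1+Γ)^K ≤ A
  have hup : (1 + Γ) ^ K ≤ A := by
    have h1 : (K : ℝ) ≤ Real.log A / Real.log (1 + Γ) :=
      Nat.floor_le (div_nonneg (Real.log_nonneg hA1) hlogG.le)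
    have h2 : (K : ℝ) * Real.log (1 + Γ) ≤ Real.log A := (le_div_iff₀ hlogG).mp h1
    have h3 : Real.log ((1 + Γ) ^ K) ≤ Real.log A := by
      rw [Real.log_pow]; exact h2
    exact (Real.log_le_log_iff (by positivity) hApos).mp h3
  -- A < (1+Γ)^(K+1)
  have hdown : A < (1 + Γ) ^ (K + 1) := by
    have h1 : Real.log A / Real.log (1 + Γ) < K + 1 := Nat.lt_floor_add_one _
    have h2 : Real.log A < (K + 1 : ℝ) * Real.log (1 + Γ) := by
      rw [div_lt_iff₀ hlogG] at h1; exact_mod_cast h1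
    have h3 : Real.log A < Real.log ((1 + Γ) ^ (K + 1)) := by
      rw [Real.log_pow]; push_cast; linarith
    exact (Real.log_lt_log_iff hApos (by positivity)).mp h3
  constructor
  · -- membership: M = K+1 is achievable
    refine ⟨fun n => σ ^ 2 * Γ * (1 + Γ) ^ (K + 1 - n), ?_, ?_, ?_, ?_⟩
    · intro i _; positivity
    · intro n _ _
      dsimp only
      have he : K + 1 - (n + 1) ≤ K + 1 - n := by omega
      have : (1 + Γ) ^ (K + 1 - (n + 1)) ≤ (1 + Γ) ^ (K + 1 - n) :=
        pow_le_pow_right₀ (by linarith) he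
      nlinarith
    · have : (1 + Γ) ^ K * (σ ^ 2 * Γ) ≤ P := by
        rw [← le_div_iff₀ hσΓ]; exact hup
      simpa [mul_comm] using this
    · intro n h1 hn
      dsimp only
      have hk : K + 1 - n ≤ K + 1 := Nat.sub_le _ _
      have hidx : (K + 1) + 1 - (K + 1 - n) = n + 1 := by omega
      have hgeo := geom_sum' σ Γ (K + 1) (K + 1 - n) hk
      rw [hidx] at hgeo
      have hsum : ∑ i ∈ Finset.Icc (n + 1) (K + 1), σ ^ 2 * Γ * (1 + Γ) ^ (K + 1 - i) + σ ^ 2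
          = σ ^ 2 * (1 + Γ) ^ (K + 1 - n) := hgeo
      rw [ge_iff_le, hsum, le_div_iff₀ (by positivity)]
      nlinarith [pow_pos (by linarith : (0:ℝ) < 1 + Γ) (K + 1 - n)]
  · -- upper bound
    rintro M ⟨p, hpos, _, hp1P, hsinr⟩
    rcases Nat.eq_zero_or_pos M with hM0 | hM1
    · omega
    have hk : M - 1 ≤ M := Nat.sub_le _ _
    have hlow := lower_sum σ Γ hσ hΓ M p hpos hsinr (M - 1) hk
    have hidx : M + 1 - (M - 1) = 2 := by omega
    rw [hidx] at hlow
    have hD : (0:ℝ) < ∑ i ∈ Finset.Icc 2 M, p i + σ ^ 2 := by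
      have : (0:ℝ) < σ ^ 2 * (1 + Γ) ^ (M - 1) := by positivity
      linarith
    have hp1 : Γ * (∑ i ∈ Finset.Icc 2 M, p i + σ ^ 2) ≤ p 1 := by
      have := hsinr 1 le_rfl hM1
      exact (le_div_iff₀ hD).mp this
    have hchain : σ ^ 2 * Γ * (1 + Γ) ^ (M - 1) ≤ P := by
      nlinarith [mul_le_mul_of_nonneg_left hlow (le_of_lt hΓ)]
    have hPlt : P < σ ^ 2 * Γ * (1 + Γ) ^ (K + 1) := by
      have := (div_lt_iff₀ hσΓ).mp hdown
      nlinarith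
    have hpow : (1 + Γ) ^ (M - 1) < (1 + Γ) ^ (K + 1) := by
      have h := lt_of_le_of_lt hchain hPlt
      have hσΓ' := hσΓ
      nlinarith
    have : M - 1 < K + 1 := by
      by_contra hcon
      push_neg at hcon
      exact absurd (pow_le_pow_right₀ (le_of_lt hG1) hcon) (not_le.mpr hpow)
    omega
end

section
/- If p_n ≥ (1+Γ)p_{n+1} for n < M, p_M ≥ σ²Γ, and Γ ≥ 1, then M ≤ log₂(p_1/(σ²Γ)) + 1. -/
theorem log2_bound_for_large_gamma (M : ℕ) (p : ℕ → ℝ) (σ Γ : ℝ)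
    (hM : 1 ≤ M) (hp : ∀ i ∈ Finset.Icc 1 M, 0 < p i)
    (hσ : 0 < σ) (hΓ : 1 ≤ Γ)
    (hratio : ∀ n, 1 ≤ n → n < M → p n ≥ (1 + Γ) * p (n + 1))
    (hlast : p M ≥ σ ^ 2 * Γ) :
    (M : ℝ) ≤ Real.logb 2 (p 1 / (σ ^ 2 * Γ)) + 1 := by
  have hσΓ : 0 < σ ^ 2 * Γ := by positivity
  have h2Γ : (2:ℝ) ≤ 1 + Γ := by linarith
  -- key: p (M - k) ≥ (1+Γ)^k * p M for k ≤ M - 1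
  have key : ∀ k, k ≤ M - 1 → (1 + Γ) ^ k * p M ≤ p (M - k) := by
    intro k hk
    induction k with
    | zero => simp
    | succ n ih =>
      have hn : n ≤ M - 1 := Nat.le_of_succ_le hk
      have ihn := ih hn
      have h1 : 1 ≤ M - (n+1) := by omega
      have h2 : M - (n+1) < M := by omega
      have hr := hratio (M - (n+1)) h1 h2
      have hs : M - (n+1) + 1 = M - n := by omega
      rw [hs] at hr
      calc (1 + Γ) ^ (n+1) * p M = (1 + Γ) * ((1 + Γ) ^ n * p M) := by ring
        _ ≤ (1 + Γ) * p (M - n) := by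
            apply mul_le_mul_of_nonneg_left ihn (by linarith)
        _ ≤ p (M - (n+1)) := hr
  have h1 := key (M - 1) le_rfl
  have hM1 : M - (M - 1) = 1 := by omega
  rw [hM1] at h1
  have hpow : (2:ℝ) ^ (M - 1) * (σ ^ 2 * Γ) ≤ p 1 := by
    calc (2:ℝ) ^ (M - 1) * (σ ^ 2 * Γ) ≤ (1 + Γ) ^ (M - 1) * (σ ^ 2 * Γ) := by
          apply mul_le_mul_of_nonneg_right _ hσΓ.le
          exact pow_le_pow_left₀ (by norm_num) h2Γ _
      _ ≤ (1 + Γ) ^ (M - 1) * p M := by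
          apply mul_le_mul_of_nonneg_left hlast (by positivity)
      _ ≤ p 1 := h1
  have hdiv : (2:ℝ) ^ (M - 1) ≤ p 1 / (σ ^ 2 * Γ) := (le_div_iff₀ hσΓ).2 hpow
  have hlog : ((M:ℝ) - 1) ≤ Real.logb 2 (p 1 / (σ ^ 2 * Γ)) := by
    have := Real.logb_le_logb_of_le (b := 2) (by norm_num) (by positivity) hdiv
    rw [Real.logb_pow, Real.logb_self_eq_one (by norm_num),
      mul_one, Nat.cast_sub hM, Nat.cast_one] at this
    exact this
  linarith
end

section
/- Given the recursive power design p_n = p_{n+1}·(1+Γ) for 1 ≤ n ≤ M−2 and p_{M−1} = (p_M + σ²)·Γ, if additionally p_M ≥ σ²·Γ, then SINR_n ≥ Γ for all 1 ≤ n ≤ M. -/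
theorem recursive_design_sufficiency (M : ℕ) (p : ℕ → ℝ) (σ Γ : ℝ)
    (hM : 2 ≤ M) (hp : ∀ i ∈ Finset.Icc 1 M, 0 < p i)
    (hσ : 0 < σ) (hΓ : 0 < Γ)
    (hrec : ∀ n, 1 ≤ n → n ≤ M - 2 → p n = p (n + 1) * (1 + Γ))
    (hpen : p (M - 1) = (p M + σ ^ 2) * Γ)
    (hlast : p M ≥ σ ^ 2 * Γ) :
    ∀ n, 1 ≤ n → n ≤ M →
      p n / (∑ i ∈ Finset.Icc (n + 1) M, p i + σ ^ 2) ≥ Γ := by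
  set S : ℕ → ℝ := fun n => ∑ i ∈ Finset.Icc (n + 1) M, p i + σ ^ 2 with hS
  have hSpos : ∀ n, 0 < S n := by
    intro n
    have : (0:ℝ) ≤ ∑ i ∈ Finset.Icc (n + 1) M, p i := by
      apply Finset.sum_nonneg
      intro i hi
      simp only [Finset.mem_Icc] at hi
      exact le_of_lt (hp i (Finset.mem_Icc.mpr ⟨le_trans (by omega) hi.1, hi.2⟩))
    have : 0 < σ ^ 2 := by positivity
    simp only [hS]
    nlinarith
  have hsplit : ∀ n, n + 1 ≤ M → S n = p (n + 1) + S (n + 1) := by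
    intro n hn
    simp only [hS]
    rw [Finset.Icc_eq_cons_Ioc hn, Finset.sum_cons, ← Finset.Icc_add_one_left_eq_Ioc]
    ring
  have key : ∀ k, ∀ n, 1 ≤ n → n ≤ M - 1 → M - 1 - n ≤ k → p n = Γ * S n := by
    intro k
    induction k with
    | zero =>
      intro n h1 h2 h3
      have hn : n = M - 1 := by omega
      subst hn
      have hM1 : M - 1 + 1 = M := by omega
      have : S (M - 1) = p M + σ ^ 2 := by
        simp only [hS, hM1, Finset.Icc_self, Finset.sum_singleton]
      rw [this, hpen]; ring
    | succ k ih =>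
      intro n h1 h2 h3
      by_cases hcase : n = M - 1
      · subst hcase
        have hM1 : M - 1 + 1 = M := by omega
        have : S (M - 1) = p M + σ ^ 2 := by
          simp only [hS, hM1, Finset.Icc_self, Finset.sum_singleton]
        rw [this, hpen]; ring
      · have hn2 : n ≤ M - 2 := by omega
        have hih : p (n + 1) = Γ * S (n + 1) := ih (n + 1) (by omega) (by omega) (by omega)
        have hsp : S n = p (n + 1) + S (n + 1) := hsplit n (by omega)
        rw [hrec n h1 hn2, hih, hsp, hih]; ring
  intro n h1 h2
  by_cases hnM : n = M
  · have hempty : Finset.Icc (n + 1) M = ∅ := by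
      apply Finset.Icc_eq_empty; omega
    show p n / (∑ i ∈ Finset.Icc (n + 1) M, p i + σ ^ 2) ≥ Γ
    rw [hempty, Finset.sum_empty, zero_add, ge_iff_le, le_div_iff₀ (by positivity)]
    have : p n = p M := by rw [hnM]
    linarith
  · have hkey : p n = Γ * S n := key (M - 1 - n) n h1 (by omega) le_rfl
    have hSn := hSpos n
    rw [ge_iff_le, hkey, mul_div_assoc, div_self (ne_of_gt hSn), mul_one]
end

section
/- For any Γ > 0 and M ≥ 1, the minimum total power Σ p_n over all power vectors satisfying SINR_n ≥ Γ for all n is achieved by the geometric design p_n = σ²Γ(1+Γ)^{M−n}, giving total σ²((1+Γ)^M − 1); i.e., any feasible vector has Σ_{n=1}^M p_n ≥ σ²((1+Γ)^M − 1), with equality for the geometric design. -/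
theorem min_total_power (M : ℕ) (σ Γ : ℝ)
    (hM : 1 ≤ M) (hσ : 0 < σ) (hΓ : 0 < Γ) :
    (∀ p : ℕ → ℝ,
      (∀ i ∈ Finset.Icc 1 M, 0 < p i) →
      (∀ n, 1 ≤ n → n ≤ M →
        p n ≥ Γ * (∑ i ∈ Finset.Icc (n + 1) M, p i + σ ^ 2)) →
      ∑ n ∈ Finset.Icc 1 M, p n ≥ σ ^ 2 * ((1 + Γ) ^ M - 1)) ∧
    (∀ p : ℕ → ℝ,
      (∀ n, 1 ≤ n → n ≤ M → p n = σ ^ 2 * Γ * (1 + Γ) ^ (M - n)) →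
      ∑ n ∈ Finset.Icc 1 M, p n = σ ^ 2 * ((1 + Γ) ^ M - 1)) := by
  constructor
  · intro p _hpos hcon
    have key : ∀ k, k ≤ M →
        σ ^ 2 * ((1 + Γ) ^ k - 1) ≤ ∑ i ∈ Finset.Icc (M - k + 1) M, p i := by
      intro k
      induction k with
      | zero =>
        intro _
        simp
      | succ k ih =>
        intro hk
        have hk' : k ≤ M := Nat.le_of_succ_le hk
        have ihk := ih hk'
        have hset : Finset.Icc (M - (k + 1) + 1) M
            = insert (M - k) (Finset.Icc (M - k + 1) M) := by
          ext x
          simp only [Finset.mem_Icc, Finset.mem_insert]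
          omega
        rw [hset, Finset.sum_insert (by simp)]
        have h1 : p (M - k) ≥ Γ * (∑ i ∈ Finset.Icc (M - k + 1) M, p i + σ ^ 2) :=
          hcon (M - k) (by omega) (by omega)
        have hΓ1 : (0:ℝ) < 1 + Γ := by linarith
        have hmul := mul_le_mul_of_nonneg_left ihk hΓ1.le
        have hps : (1 + Γ) ^ (k + 1) = (1 + Γ) ^ k * (1 + Γ) := pow_succ _ _
        rw [hps]
        nlinarith [hmul, h1]
    have := key M le_rfl
    simp only [Nat.sub_self] at this
    linarith [this]
  · intro p hp
    have h1 : ∑ n ∈ Finset.Icc 1 M, p n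
        = ∑ n ∈ Finset.Icc 1 M, σ ^ 2 * Γ * (1 + Γ) ^ (M - n) := by
      apply Finset.sum_congr rfl
      intro n hn
      simp only [Finset.mem_Icc] at hn
      exact hp n hn.1 hn.2
    rw [h1]
    have h2 : ∑ n ∈ Finset.Icc 1 M, σ ^ 2 * Γ * (1 + Γ) ^ (M - n)
        = ∑ j ∈ Finset.range M, σ ^ 2 * Γ * (1 + Γ) ^ j := by
      apply Finset.sum_nbij' (fun n => M - n) (fun j => M - j)
      · intro n hn; simp only [Finset.mem_Icc] at hn; simp only [Finset.mem_range]; omega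
      · intro j hj; simp only [Finset.mem_range] at hj; simp only [Finset.mem_Icc]; omega
      · intro n hn; simp only [Finset.mem_Icc] at hn; omega
      · intro j hj; simp only [Finset.mem_range] at hj; omega
      · intro n hn; rfl
    rw [h2, ← Finset.mul_sum]
    have hne : (1 + Γ : ℝ) ≠ 1 := by linarith
    rw [geom_sum_eq hne]
    field_simp
    ring
end
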